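/- For the dual of a session type, the remainder operation satisfies: if rem(T, τ) and rem(T', τ') are both defined and rem(T, τ) = dual(rem(T', τ')), then after a type-environment output step on T (choosing in each hole of its asynchronous context a branch with label l and enqueueing !l(S) onto τ'), the remainders are still dual. (Preservation of duality of remainders under the session-environment reduction rule tr-out.) -/

import Mathlib

/-- Session types with de Bruijn indices for recursion variables.
`branch`/`select` carry lists of (label, carried type, continuation). -/
inductive SessionType : Type where
  | done : SessionType
  | var : Nat → SessionType
  | mu : SessionType → SessionType
  | branch : List (Nat × SessionType × SessionType) → SessionType
  | select : List (Nat × SessionType × SessionType) → SessionType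

abbrev SEntry := Nat × SessionType × SessionType

namespace SessionType

mutual
def subst (x : Nat) (U : SessionType) : SessionType → SessionType
  | .done => .done
  | .var n => if n = x then U else .var n
  | .mu T => .mu (subst (x+1) U T)
  | .branch bs => .branch (substList x U bs)
  | .select bs => .select (substList x U bs)
def substList (x : Nat) (U : SessionType) : List SEntry → List SEntry
  | [] => []
  | (l, s, t) :: rest => (l, subst x U s, subst x U t) :: substList x U rest
end

mutual
def dual : SessionType → SessionType
  | .done => .done
  | .var n => .var n
  | .mu T => .mu (dual T)
  | .branch bs => .select (dualList bs)
  | .select bs => .branch (dualList bs)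
def dualList : List SEntry → List SEntry
  | [] => []
  | (l, s, t) :: rest => (l, s, dual t) :: dualList rest
end

mutual
def fvBelow (k : Nat) : SessionType → Bool
  | .done => true
  | .var n => decide (n < k)
  | .mu T => fvBelow (k+1) T
  | .branch bs => fvBelowList k bs
  | .select bs => fvBelowList k bs
def fvBelowList (k : Nat) : List SEntry → Bool
  | [] => true
  | (_, s, t) :: rest => fvBelow k s && fvBelow k t && fvBelowList k rest
end

/-- Closed session types (no free recursion variables). -/
def ClosedTy (T : SessionType) : Prop := fvBelow 0 T = true

end SessionType

open SessionType

/-- The equi-recursive unfolding of `μt.T` (body `T`): `T[μt.T/t]`. -/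
def unfoldMu (T : SessionType) : SessionType := subst 0 (.mu T) T

/-- One step of the coinductive synchronous subtyping rules (sub-end, sub-bra, sub-sel),
with the equi-recursive identification of a μ-type with its unfolding. -/
def SubSF (R : SessionType → SessionType → Prop) (T S : SessionType) : Prop :=
  (T = .done ∧ S = .done) ∨
  (∃ bs bs', T = .branch bs ∧ S = .branch bs' ∧
    ∀ e' ∈ bs', ∃ e ∈ bs, e.1 = e'.1 ∧ R e.2.1 e'.2.1 ∧ R e.2.2 e'.2.2) ∨
  (∃ bs bs', T = .select bs ∧ S = .select bs' ∧
    ∀ e ∈ bs, ∃ e' ∈ bs', e.1 = e'.1 ∧ R e'.2.1 e.2.1 ∧ R e.2.2 e'.2.2) ∨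
  (∃ T', T = .mu T' ∧ R (unfoldMu T') S) ∨
  (∃ S', S = .mu S' ∧ R T (unfoldMu S'))

/-- Synchronous session subtyping `≤s`: greatest fixpoint of `SubSF`. -/
def SubS (T S : SessionType) : Prop :=
  ∃ R, R T S ∧ ∀ a b, R a b → SubSF R a b

/-- Asynchronous contexts: finite trees of branchings with indexed holes. -/
inductive ACtx : Type where
  | hole : Nat → ACtx
  | branch : List (Nat × SessionType × ACtx) → ACtx

abbrev AEntry := Nat × SessionType × ACtx

mutual
/-- Fill each hole `[]^n` of a context with `f n`. -/
def fillA (f : Nat → SessionType) : ACtx → SessionType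
  | .hole n => f n
  | .branch bs => .branch (fillAList f bs)
def fillAList (f : Nat → SessionType) : List AEntry → List SEntry
  | [] => []
  | (l, s, A) :: rest => (l, s, fillA f A) :: fillAList f rest
end

mutual
/-- The hole indices of an asynchronous context. -/
def holesA : ACtx → List Nat
  | .hole n => [n]
  | .branch bs => holesAList bs
def holesAList : List AEntry → List Nat
  | [] => []
  | (_, _, A) :: rest => holesA A ++ holesAList rest
end

/-- `& ∈ T`: every continuation path of the tree of `T` contains a branching. -/
inductive BranchIn : SessionType → Prop where
  | bra : ∀ bs, BranchIn (.branch bs)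
  | sel : ∀ bs, (∀ e ∈ bs, BranchIn e.2.2) → BranchIn (.select bs)
  | mu : ∀ T, BranchIn T → BranchIn (.mu T)

/-- `& ∉ T`: some continuation path of the tree of `T` contains no branching. -/
inductive BranchNotIn : SessionType → Prop where
  | done : BranchNotIn .done
  | var : ∀ n, BranchNotIn (.var n)
  | sel : ∀ bs e, e ∈ bs → BranchNotIn e.2.2 → BranchNotIn (.select bs)
  | mu : ∀ T, BranchNotIn T → BranchNotIn (.mu T)

/-- `⊕ ∈ T`: every continuation path of the tree of `T` contains a selection. -/
inductive SelIn : SessionType → Prop where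
  | sel : ∀ bs, SelIn (.select bs)
  | bra : ∀ bs, (∀ e ∈ bs, SelIn e.2.2) → SelIn (.branch bs)
  | mu : ∀ T, SelIn T → SelIn (.mu T)

/-- `⊕ ∉ T`: some continuation path of the tree of `T` contains no selection. -/
inductive SelNotIn : SessionType → Prop where
  | done : SelNotIn .done
  | var : ∀ n, SelNotIn (.var n)
  | bra : ∀ bs e, e ∈ bs → SelNotIn e.2.2 → SelNotIn (.branch bs)
  | mu : ∀ T, SelNotIn T → SelNotIn (.mu T)

/-- One step of asynchronous subtyping: the synchronous rules together with
rule sub-perm-async. -/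
def SubAF (R : SessionType → SessionType → Prop) (T S : SessionType) : Prop :=
  SubSF R T S ∨
  (∃ (bs : List SEntry) (A : ACtx) (g : Nat → List SEntry),
    T = .select bs ∧ S = fillA (fun n => .select (g n)) A ∧
    (∃ cbs, A = .branch cbs) ∧
    (∀ e ∈ bs, BranchIn e.2.2 ∧
      ∃ h : Nat → SEntry,
        (∀ n ∈ holesA A, h n ∈ g n ∧ (h n).1 = e.1 ∧ R (h n).2.1 e.2.1) ∧
        R e.2.2 (fillA (fun n => (h n).2.2) A)))

/-- Asynchronous session subtyping `≤a`: greatest fixpoint of `SubAF`. -/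
def SubA (T S : SessionType) : Prop :=
  ∃ R, R T S ∧ ∀ a b, R a b → SubAF R a b

/-- The inductive negation `⋪s` of synchronous subtyping (Table 9),
with μ-unfolding steps for the equi-recursive reading. -/
inductive NSubS : SessionType → SessionType → Prop where
  | endR : ∀ T, T ≠ .done → NSubS .done T
  | endL : ∀ T, T ≠ .done → NSubS T .done
  | brasel : ∀ bs bs', NSubS (.branch bs) (.select bs')
  | selbra : ∀ bs bs', NSubS (.select bs) (.branch bs')
  | labelBra : ∀ bs bs' e', e' ∈ bs' → (∀ e ∈ bs, e.1 ≠ e'.1) →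
      NSubS (.branch bs) (.branch bs')
  | labelSel : ∀ bs bs' e, e ∈ bs → (∀ e' ∈ bs', e.1 ≠ e'.1) →
      NSubS (.select bs) (.select bs')
  | exchBra : ∀ bs bs' e e', e ∈ bs → e' ∈ bs' → e.1 = e'.1 →
      NSubS e.2.1 e'.2.1 → NSubS (.branch bs) (.branch bs')
  | exchSel : ∀ bs bs' e e', e ∈ bs → e' ∈ bs' → e.1 = e'.1 →
      NSubS e'.2.1 e.2.1 → NSubS (.select bs) (.select bs')
  | contBra : ∀ bs bs' e e', e ∈ bs → e' ∈ bs' → e.1 = e'.1 →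
      NSubS e.2.2 e'.2.2 → NSubS (.branch bs) (.branch bs')
  | contSel : ∀ bs bs' e e', e ∈ bs → e' ∈ bs' → e.1 = e'.1 →
      NSubS e.2.2 e'.2.2 → NSubS (.select bs) (.select bs')
  | muL : ∀ T S, NSubS (unfoldMu T) S → NSubS (.mu T) S
  | muR : ∀ T S, NSubS T (unfoldMu S) → NSubS T (.mu S)

/-- The inductive negation `⋪a` of asynchronous subtyping: the synchronous
negation rules except selection-⋪-branching, plus the five asynchronous rules.
The boolean flag records whether the rules n-bra-async and n-sel-async may be used
(`NSubA false` is derivability without those two rules). -/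
inductive NSubA : Bool → SessionType → SessionType → Prop where
  | endR : ∀ b T, T ≠ .done → NSubA b .done T
  | endL : ∀ b T, T ≠ .done → NSubA b T .done
  | brasel : ∀ b bs bs', NSubA b (.branch bs) (.select bs')
  | labelBra : ∀ b bs bs' e', e' ∈ bs' → (∀ e ∈ bs, e.1 ≠ e'.1) →
      NSubA b (.branch bs) (.branch bs')
  | labelSel : ∀ b bs bs' e, e ∈ bs → (∀ e' ∈ bs', e.1 ≠ e'.1) →
      NSubA b (.select bs) (.select bs')
  | exchBra : ∀ b bs bs' e e', e ∈ bs → e' ∈ bs' → e.1 = e'.1 →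
      NSubA b e.2.1 e'.2.1 → NSubA b (.branch bs) (.branch bs')
  | exchSel : ∀ b bs bs' e e', e ∈ bs → e' ∈ bs' → e.1 = e'.1 →
      NSubA b e'.2.1 e.2.1 → NSubA b (.select bs) (.select bs')
  | contBra : ∀ b bs bs' e e', e ∈ bs → e' ∈ bs' → e.1 = e'.1 →
      NSubA b e.2.2 e'.2.2 → NSubA b (.branch bs) (.branch bs')
  | contSel : ∀ b bs bs' e e', e ∈ bs → e' ∈ bs' → e.1 = e'.1 →
      NSubA b e.2.2 e'.2.2 → NSubA b (.select bs) (.select bs')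
  | labelAsync : ∀ b bs (A : ACtx) (g : Nat → List SEntry) e n,
      e ∈ bs → n ∈ holesA A → (∀ e' ∈ g n, e'.1 ≠ e.1) →
      NSubA b (.select bs) (fillA (fun m => .select (g m)) A)
  | exchAsync : ∀ b bs (A : ACtx) (g : Nat → List SEntry) e n e',
      e ∈ bs → n ∈ holesA A → e' ∈ g n → e'.1 = e.1 →
      NSubA b e'.2.1 e.2.1 →
      NSubA b (.select bs) (fillA (fun m => .select (g m)) A)
  | contAsync : ∀ b bs (A : ACtx) (g : Nat → List SEntry)
      (j : SEntry → Nat → SEntry) e₀,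
      (∀ e ∈ bs, ∀ n ∈ holesA A, j e n ∈ g n ∧ (j e n).1 = e.1) →
      e₀ ∈ bs →
      NSubA b e₀.2.2 (fillA (fun n => (j e₀ n).2.2) A) →
      NSubA b (.select bs) (fillA (fun m => .select (g m)) A)
  | braAsync : ∀ T bs, BranchNotIn T → NSubA true T (.branch bs)
  | selAsync : ∀ bs T, SelNotIn T → NSubA true (.select bs) T
  | muL : ∀ b T S, NSubA b (unfoldMu T) S → NSubA b (.mu T) S
  | muR : ∀ b T S, NSubA b T (unfoldMu S) → NSubA b T (.mu S)

/-- Subtyping between asynchronous contexts (Table 12). -/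
inductive CtxSubA : ACtx → ACtx → Prop where
  | hole : ∀ n, CtxSubA (.hole n) (.hole n)
  | bra : ∀ bs bs' (m : AEntry → AEntry),
      (∀ e' ∈ bs', m e' ∈ bs ∧ (m e').1 = e'.1 ∧ SubA (m e').2.1 e'.2.1) →
      (∀ e' ∈ bs', CtxSubA (m e').2.2 e'.2.2) →
      CtxSubA (.branch bs) (.branch bs')

/-- Duals of asynchronous contexts: finite trees of selections with indexed holes. -/
inductive BCtx : Type where
  | hole : Nat → BCtx
  | sel : List (Nat × SessionType × BCtx) → BCtx

abbrev BEntry := Nat × SessionType × BCtx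

mutual
def fillB (f : Nat → SessionType) : BCtx → SessionType
  | .hole n => f n
  | .sel bs => .select (fillBList f bs)
def fillBList (f : Nat → SessionType) : List BEntry → List SEntry
  | [] => []
  | (l, s, B) :: rest => (l, s, fillB f B) :: fillBList f rest
end

mutual
def holesB : BCtx → List Nat
  | .hole n => [n]
  | .sel bs => holesBList bs
def holesBList : List BEntry → List Nat
  | [] => []
  | (_, _, B) :: rest => holesB B ++ holesBList rest
end

/-- Subtyping between duals of asynchronous contexts (rules sub-empty, sub-dual-cont),
with `SubS` on carried types. -/
inductive CtxSubB : BCtx → BCtx → Prop where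
  | hole : ∀ n, CtxSubB (.hole n) (.hole n)
  | sel : ∀ bs bs' (m : BEntry → BEntry),
      (∀ e ∈ bs, m e ∈ bs' ∧ (m e).1 = e.1 ∧ SubS (m e).2.1 e.2.1) →
      (∀ e ∈ bs, CtxSubB e.2.2 (m e).2.2) →
      CtxSubB (.sel bs) (.sel bs')

/-- Coinductively: no continuation path of the tree of `T` contains a branching. -/
def NoBranchPathsF (R : SessionType → Prop) (T : SessionType) : Prop :=
  T = .done ∨ (∃ n, T = .var n) ∨
  (∃ bs, T = .select bs ∧ ∀ e ∈ bs, R e.2.2) ∨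
  (∃ T', T = .mu T' ∧ R (unfoldMu T'))

def NoBranchPaths (T : SessionType) : Prop :=
  ∃ R, R T ∧ ∀ a, R a → NoBranchPathsF R a

/-- Queue types: sequences of messages `!l(S)` (label, carried type); `ε = []`. -/
abbrev QType := List (Nat × SessionType)

/-- The session remainder `rem(T, τ)` as a relation (rules rm-empty, rm-bra, rm-sel). -/
inductive Rem : SessionType → QType → SessionType → Prop where
  | empty : ∀ T, Rem T [] T
  | bra : ∀ bs l S τ T' e, e ∈ bs → e.1 = l → SubA e.2.1 S → Rem e.2.2 τ T' →
      Rem (.branch bs) ((l, S) :: τ) T'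
  | sel : ∀ (bs bs' : List SEntry) τ, bs.length = bs'.length →
      (∀ i (h : i < bs.length) (h' : i < bs'.length),
        (bs.get ⟨i, h⟩).1 = (bs'.get ⟨i, h'⟩).1 ∧
        (bs.get ⟨i, h⟩).2.1 = (bs'.get ⟨i, h'⟩).2.1) →
      (∀ i (h : i < bs.length) (h' : i < bs'.length),
        Rem (bs.get ⟨i, h⟩).2.2 τ (bs'.get ⟨i, h'⟩).2.2) →
      Rem (.select bs) τ (.select bs')

/-- Remainder of an asynchronous context: the queue is consumed within the context. -/
inductive RemCtx : ACtx → QType → ACtx → Prop where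
  | empty : ∀ A, RemCtx A [] A
  | bra : ∀ (bs : List AEntry) l S τ A' e, e ∈ bs → e.1 = l → SubA e.2.1 S →
      RemCtx e.2.2 τ A' → RemCtx (.branch bs) ((l, S) :: τ) A'

/-- Consuming the queue through the context reaches hole `n₀` with residual queue `τ₀`. -/
inductive RemToHole : ACtx → QType → Nat → QType → Prop where
  | hole : ∀ n τ, RemToHole (.hole n) τ n τ
  | bra : ∀ (bs : List AEntry) l S τ n₀ τ₀ e, e ∈ bs → e.1 = l → SubA e.2.1 S →
      RemToHole e.2.2 τ n₀ τ₀ → RemToHole (.branch bs) ((l, S) :: τ) n₀ τ₀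

/-- Session environments: channels (names) to session types, ordered channel
pairs (queue `a→b`) to queue types; both partial. -/
structure SEnv where
  chan : Nat → Option SessionType
  qu : Nat × Nat → Option QType

/-- Balanced session environments. -/
def EnvBalanced (Δ : SEnv) : Prop :=
  (∀ a b T τ, Δ.chan a = some T → Δ.qu (b, a) = some τ → ∃ U, Rem T τ U) ∧
  (∀ a b T T' τ τ', Δ.chan a = some T → Δ.qu (b, a) = some τ →
    Δ.chan b = some T' → Δ.qu (a, b) = some τ' →
    ∃ U U', Rem T τ U ∧ Rem T' τ' U' ∧ U = dual U')

/-- Reduction of session environments (rules tr-in, tr-out; tr-res is implicit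
since reduction only updates the affected channel and queue). -/
inductive EnvRed : SEnv → SEnv → Prop where
  | trIn : ∀ (Δ : SEnv) a b (bs : List SEntry) l S τ e,
      Δ.chan b = some (.branch bs) → Δ.qu (a, b) = some ((l, S) :: τ) →
      e ∈ bs → e.1 = l → SubA e.2.1 S →
      EnvRed Δ ⟨Function.update Δ.chan b (some e.2.2),
                Function.update Δ.qu (a, b) (some τ)⟩
  | trOut : ∀ (Δ : SEnv) a b (A : ACtx) (g : Nat → List SEntry) τ l S
      (choice : Nat → SEntry),
      Δ.chan a = some (fillA (fun n => .select (g n)) A) →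
      Δ.qu (a, b) = some τ →
      (∀ n ∈ holesA A, choice n ∈ g n ∧ (choice n).1 = l ∧ SubA (choice n).2.1 S) →
      EnvRed Δ ⟨Function.update Δ.chan a (some (fillA (fun n => (choice n).2.2) A)),
                Function.update Δ.qu (a, b) (some (τ ++ [(l, S)]))⟩

section AuxRemDual

open SessionType

theorem dualList_eq_map : ∀ bs : List SEntry,
    dualList bs = bs.map (fun e => (e.1, e.2.1, dual e.2.2))
  | [] => rfl
  | (l, s, t) :: rest => by simp [dualList, dualList_eq_map rest]

theorem fillAList_eq_map (f : Nat → SessionType) : ∀ bs : List AEntry,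
    fillAList f bs = bs.map (fun e => (e.1, e.2.1, fillA f e.2.2))
  | [] => rfl
  | (l, s, A) :: rest => by simp [fillAList, fillAList_eq_map f rest]

/-- Pointwise relation used for inverting `Rem` on selections. -/
def RemRel (τ : QType) (e e' : SEntry) : Prop :=
  e.1 = e'.1 ∧ e.2.1 = e'.2.1 ∧ Rem e.2.2 τ e'.2.2

theorem rem_select_inv {bs : List SEntry} {τ : QType} {V : SessionType}
    (h : Rem (.select bs) τ V) :
    ∃ bs', V = .select bs' ∧ List.Forall₂ (RemRel τ) bs bs' := by
  cases h with
  | empty =>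
      exact ⟨bs, rfl, List.forall₂_same.2 fun e _ => ⟨rfl, rfl, Rem.empty _⟩⟩
  | sel _ bs' _ hlen hlab hrem =>
      refine ⟨bs', rfl, List.forall₂_iff_get.2 ⟨hlen, fun i h₁ h₂ => ?_⟩⟩
      exact ⟨(hlab i h₁ h₂).1, (hlab i h₁ h₂).2, hrem i h₁ h₂⟩

theorem rem_sel_of_forall₂ {bs bs' : List SEntry} {τ : QType}
    (h : List.Forall₂ (RemRel τ) bs bs') : Rem (.select bs) τ (.select bs') := by
  rw [List.forall₂_iff_get] at h
  exact Rem.sel bs bs' τ h.1 (fun i h₁ h₂ => ⟨(h.2 i h₁ h₂).1, (h.2 i h₁ h₂).2.1⟩)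
    (fun i h₁ h₂ => (h.2 i h₁ h₂).2.2)

theorem forall₂_mem_left {α β : Type*} {R : α → β → Prop} {l₁ : List α} {l₂ : List β}
    (h : List.Forall₂ R l₁ l₂) : ∀ {a : α}, a ∈ l₁ → ∃ b ∈ l₂, R a b := by
  induction h with
  | nil => intro a ha; cases ha
  | cons hr _ ih =>
      intro a ha
      rcases List.mem_cons.1 ha with rfl | ha
      · exact ⟨_, List.mem_cons_self, hr⟩
      · rcases ih ha with ⟨b, hb, hrb⟩
        exact ⟨b, List.mem_cons_of_mem _ hb, hrb⟩

theorem rem_append {T : SessionType} {τ₁ : QType} {U : SessionType}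
    (h₁ : Rem T τ₁ U) : ∀ {τ₂ : QType} {V : SessionType}, Rem U τ₂ V →
    Rem T (τ₁ ++ τ₂) V := by
  induction h₁ with
  | empty => intro τ₂ V h₂; simpa using h₂
  | bra bs l S τ T' e he hl hsub _ ih =>
      intro τ₂ V h₂
      exact Rem.bra bs l S (τ ++ τ₂) V e he hl hsub (ih h₂)
  | sel bs bs' τ hlen hlab hrem ih =>
      intro τ₂ V h₂
      obtain ⟨bs'', rfl, hf⟩ := rem_select_inv h₂
      rw [List.forall₂_iff_get] at hf
      refine Rem.sel bs bs'' (τ ++ τ₂) (hlen.trans hf.1) ?_ ?_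
      · intro i h₁ h₂'
        have h' : i < bs'.length := hlen ▸ h₁
        exact ⟨(hlab i h₁ h').1.trans (hf.2 i h' h₂').1,
          (hlab i h₁ h').2.trans (hf.2 i h' h₂').2.1⟩
      · intro i h₁ h₂'
        have h' : i < bs'.length := hlen ▸ h₁
        exact ih i h₁ h' ((hf.2 i h' h₂').2.2)

theorem mem_holesAList_of_mem {bsA : List AEntry} {a : AEntry}
    {n : Nat} (hn : n ∈ holesA a.2.2) : a ∈ bsA → n ∈ holesAList bsA := by
  induction bsA with
  | nil => intro ha; cases ha
  | cons b rest ih =>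
      intro ha
      rcases List.mem_cons.1 ha with heq | ha2
      · subst heq
        obtain ⟨lx, sx, Ax⟩ := a
        exact List.mem_append.2 (Or.inl hn)
      · obtain ⟨lx, sx, Ax⟩ := b
        exact List.mem_append.2 (Or.inr (ih ha2))

mutual

theorem remdual_L0 (l : Nat) (S : SessionType) (g : Nat → List SEntry)
    (choice : Nat → SEntry) (A : ACtx) (U' : SessionType)
    (hd : dual U' = fillA (fun n => .select (g n)) A)
    (hch : ∀ n ∈ holesA A, choice n ∈ g n ∧ (choice n).1 = l ∧ SubA (choice n).2.1 S) :
    ∃ U₂', Rem U' [(l, S)] U₂' ∧ fillA (fun n => (choice n).2.2) A = dual U₂' := by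
  cases A with
  | hole n =>
      simp only [fillA] at hd ⊢
      obtain ⟨cs, rfl, hcs⟩ : ∃ cs, U' = .branch cs ∧ dualList cs = g n := by
        cases U' <;> simp_all [dual]
      obtain ⟨hmem, hlab, hsub⟩ := hch n (by simp [holesA])
      rw [← hcs, dualList_eq_map] at hmem
      obtain ⟨c, hc, hceq⟩ := List.mem_map.1 hmem
      refine ⟨c.2.2, Rem.bra cs l S [] c.2.2 c hc ?_ ?_ (Rem.empty _), ?_⟩
      · have : (choice n).1 = c.1 := by rw [← hceq]
        omega
      · have : (choice n).2.1 = c.2.1 := by rw [← hceq]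
        rwa [this] at hsub
      · rw [← hceq]
  | branch bsA =>
      simp only [fillA] at hd ⊢
      obtain ⟨cs, rfl, hcs⟩ : ∃ cs, U' = .select cs ∧
          dualList cs = fillAList (fun n => .select (g n)) bsA := by
        cases U' <;> simp_all [dual]
      obtain ⟨cs₂, hf, heq⟩ := remdual_L0list l S g choice bsA cs hcs
        (fun n hn => hch n (by simpa [holesA] using hn))
      exact ⟨.select cs₂, rem_sel_of_forall₂ hf, by simp [dual, heq]⟩

theorem remdual_L0list (l : Nat) (S : SessionType) (g : Nat → List SEntry)
    (choice : Nat → SEntry) (bsA : List AEntry) (cs : List SEntry)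
    (hd : dualList cs = fillAList (fun n => .select (g n)) bsA)
    (hch : ∀ n ∈ holesAList bsA, choice n ∈ g n ∧ (choice n).1 = l ∧ SubA (choice n).2.1 S) :
    ∃ cs₂ : List SEntry, List.Forall₂ (RemRel [(l, S)]) cs cs₂ ∧
      fillAList (fun n => (choice n).2.2) bsA = dualList cs₂ := by
  cases bsA with
  | nil =>
      have : cs = [] := by
        cases cs with
        | nil => rfl
        | cons c cs' => simp [dualList, fillAList] at hd
      subst this
      exact ⟨[], List.Forall₂.nil, rfl⟩
  | cons a rest =>
      obtain ⟨la, sa, A'⟩ := a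
      cases cs with
      | nil => simp [dualList, fillAList] at hd
      | cons c cs' =>
          obtain ⟨lc, sc, tc⟩ := c
          simp only [dualList, fillAList, List.cons.injEq, Prod.mk.injEq] at hd
          obtain ⟨⟨hl1, hl2, hl3⟩, htail⟩ := hd
          obtain ⟨u, hu, hueq⟩ := remdual_L0 l S g choice A' tc hl3
            (fun n hn => hch n (by
              simp only [holesAList]
              exact List.mem_append.2 (Or.inl hn)))
          obtain ⟨cs₂', hf', heq'⟩ := remdual_L0list l S g choice rest cs' htail
            (fun n hn => hch n (by
              simp only [holesAList]
              exact List.mem_append.2 (Or.inr hn)))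
          refine ⟨(lc, sc, u) :: cs₂', List.Forall₂.cons ⟨rfl, rfl, hu⟩ hf', ?_⟩
          simp [fillAList, dualList, heq', hl1, hl2, hueq]

end

theorem remdual_main (l : Nat) (S : SessionType) (g : Nat → List SEntry)
    (choice : Nat → SEntry) (A : ACtx) (τ : QType) (U U' : SessionType)
    (hrem : Rem (fillA (fun n => .select (g n)) A) τ U) (hd : dual U' = U)
    (hch : ∀ n ∈ holesA A, choice n ∈ g n ∧ (choice n).1 = l ∧ SubA (choice n).2.1 S) :
    ∃ U₂ U₂', Rem (fillA (fun n => (choice n).2.2) A) τ U₂ ∧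
      Rem U' [(l, S)] U₂' ∧ U₂ = dual U₂' := by
  cases A with
  | hole n =>
      simp only [fillA] at hrem ⊢
      obtain ⟨bs', rfl, hf⟩ := rem_select_inv hrem
      obtain ⟨cs, rfl, hcs⟩ : ∃ cs, U' = .branch cs ∧ dualList cs = bs' := by
        cases U' <;> simp_all [dual]
      obtain ⟨hmem, hlab, hsub⟩ := hch n (by simp [holesA])
      obtain ⟨b, hb, hbr⟩ := forall₂_mem_left hf hmem
      rw [← hcs, dualList_eq_map] at hb
      obtain ⟨c, hc, hceq⟩ := List.mem_map.1 hb
      obtain ⟨hr1, hr2, hr3⟩ := hbr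
      refine ⟨b.2.2, c.2.2, hr3, Rem.bra cs l S [] c.2.2 c hc ?_ ?_ (Rem.empty _), ?_⟩
      · have h1 : c.1 = b.1 := by rw [← hceq]
        omega
      · have h2 : c.2.1 = b.2.1 := by rw [← hceq]
        rw [h2, ← hr2]
        exact hsub
      · rw [← hceq]
  | branch bsA =>
      simp only [fillA] at hrem ⊢
      cases hrem with
      | empty =>
          obtain ⟨U₂', hu, heq⟩ := remdual_L0 l S g choice (.branch bsA) U' hd hch
          simp only [fillA] at hd heq
          exact ⟨_, U₂', Rem.empty _, hu, heq⟩
      | bra _bb l' S' τ' _U e he hl' hsub hrem' =>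
          rw [fillAList_eq_map] at he
          obtain ⟨a, ha, haeq⟩ := List.mem_map.1 he
          have hsub2 : e.2.2 = fillA (fun n => .select (g n)) a.2.2 := by rw [← haeq]
          rw [hsub2] at hrem'
          obtain ⟨U₂, U₂', h1, h2, h3⟩ := remdual_main l S g choice a.2.2 τ' _ U' hrem' hd
            (fun n hn => hch n (by
              simpa [holesA] using mem_holesAList_of_mem hn ha))
          refine ⟨U₂, U₂', ?_, h2, h3⟩
          refine Rem.bra _ l' S' τ' U₂ (a.1, a.2.1, fillA (fun n => (choice n).2.2) a.2.2)
            ?_ ?_ ?_ h1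
          · rw [fillAList_eq_map]
            exact List.mem_map.2 ⟨a, ha, rfl⟩
          · have : e.1 = a.1 := by rw [← haeq]
            simpa [← this]
          · have : e.2.1 = a.2.1 := by rw [← haeq]
            simpa [← this] using hsub
termination_by sizeOf A
decreasing_by
  have hlt := List.sizeOf_lt_of_mem ha
  obtain ⟨la, sa, A'⟩ := a
  subst A
  simp only [ACtx.branch.sizeOf_spec]
  simp at hlt ⊢
  omega

end AuxRemDual

/-- Preservation of duality of remainders under the session-environment
output step tr-out: if `rem(T, τ) = dual(rem(T', τ'))` and `T` performs an
output step (choosing in each hole of its asynchronous context a branch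
labelled `l` and enqueueing `!l(S)` onto `τ'`), the remainders are still dual. -/
theorem rem_dual_preserved_trOut :
    ∀ (A : ACtx) (g : Nat → List SEntry) (T' : SessionType) (τ τ' : QType)
      (U U' : SessionType) (l : Nat) (S : SessionType) (choice : Nat → SEntry),
    Rem (fillA (fun n => .select (g n)) A) τ U →
    Rem T' τ' U' →
    U = dual U' →
    (∀ n ∈ holesA A, choice n ∈ g n ∧ (choice n).1 = l ∧ SubA (choice n).2.1 S) →
    ∃ U₂ U₂' : SessionType,
      Rem (fillA (fun n => (choice n).2.2) A) τ U₂ ∧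
      Rem T' (τ' ++ [(l, S)]) U₂' ∧ U₂ = dual U₂' := by
  intro A g T' τ τ' U U' l S choice hA hT' hdual hch
  obtain ⟨U₂, U₂', h1, h2, h3⟩ := remdual_main l S g choice A τ U U' hA hdual.symm hch
  exact ⟨U₂, U₂', h1, rem_append hT' h2, h3⟩
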